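/- Let G be a connected graph on n vertices. Then 2√F ≤ LE_R(G) ≤ √(2nF), where f = Σ_{1≤i<j≤n} r(i,j)² and F = f + (1/2) Σ_{i=1}^n (RTr(i) − (1/n) Σ_{j=1}^n RTr(j))². -/

import Mathlib

open Matrix Polynomial BigOperators

/-- `Ldag` is the Moore–Penrose inverse of `L`: `L Ldag L = L`, `Ldag L Ldag = Ldag`,
and both `L Ldag` and `Ldag L` are symmetric. -/
def IsMoorePenroseInv {V : Type*} [Fintype V] (L Ldag : Matrix V V ℝ) : Prop :=
  L * Ldag * L = L ∧ Ldag * L * Ldag = Ldag ∧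
    (L * Ldag)ᵀ = L * Ldag ∧ (Ldag * L)ᵀ = Ldag * L

/-- The resistance distance between vertices `i` and `j`, computed from the
Moore–Penrose inverse `Ldag` of the Laplacian: `r(i,j) = Ldag i i + Ldag j j - 2 Ldag i j`. -/
def resDist {V : Type*} (Ldag : Matrix V V ℝ) (i j : V) : ℝ :=
  Ldag i i + Ldag j j - 2 * Ldag i j

/-- The resistance distance matrix `R(G)`. -/
def resMatrix {V : Type*} [DecidableEq V] (Ldag : Matrix V V ℝ) : Matrix V V ℝ :=
  Matrix.of fun i j => if i = j then 0 else resDist Ldag i j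

/-- The resistance transmission `RTr(v) = ∑ u, r(u,v)` of a vertex `v`. -/
def resTrans {V : Type*} [Fintype V] (Ldag : Matrix V V ℝ) (v : V) : ℝ :=
  ∑ u, resDist Ldag u v

/-- The resistance Laplacian matrix `R^L = Diag(RTr) - R`. -/
def resLap {V : Type*} [Fintype V] [DecidableEq V] (Ldag : Matrix V V ℝ) : Matrix V V ℝ :=
  Matrix.diagonal (resTrans Ldag) - resMatrix Ldag

/-- The resistance signless Laplacian matrix `R^Q = Diag(RTr) + R`. -/
def resSignlessLap {V : Type*} [Fintype V] [DecidableEq V] (Ldag : Matrix V V ℝ) :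
    Matrix V V ℝ :=
  Matrix.diagonal (resTrans Ldag) + resMatrix Ldag

instance {V W : Type*} : DecidableRel (completeBipartiteGraph V W).Adj := fun v w => by
  simp only [completeBipartiteGraph_adj]
  infer_instance

/-!
The centred eigenvalues `ηᵢ = γᵢ - (∑ RTr)/n` of the resistance Laplacian sum to zero (the trace
of `R^L` is `∑ RTr`), and `∑ ηᵢ² = 2F`, because the trace of `(R^L)²` is
`∑ RTr(i)² + 2 ∑_{i<j} r(i,j)²`. For any real vector with zero sum, `2 ∑ ηᵢ² ≤ (∑ |ηᵢ|)²`: each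
`|ηᵢ|` is at most half of `∑ |ηⱼ|`, since `ηᵢ` is minus the sum of the others. Cauchy–Schwarz
gives `(∑ |ηᵢ|)² ≤ n ∑ ηᵢ²`. Symmetry of `L†`, needed for `R^L` to have real spectrum, follows
from uniqueness of the Moore–Penrose inverse of the symmetric matrix `L(G)`.
-/

namespace IsMoorePenroseInv

variable {V : Type*} [Fintype V] {L A B : Matrix V V ℝ}

theorem unique (hA : IsMoorePenroseInv L A) (hB : IsMoorePenroseInv L B) : A = B := by
  obtain ⟨a1, a2, a3, a4⟩ := hA
  obtain ⟨b1, b2, b3, b4⟩ := hB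
  have hLB : L * B = L * A :=
    calc L * B = (L * A) * (L * B) := by rw [← mul_assoc, a1]
    _ = (L * A)ᵀ * (L * B)ᵀ := by rw [a3, b3]
    _ = (L * B * L * A)ᵀ := by simp only [transpose_mul, mul_assoc]
    _ = L * A := by rw [b1, a3]
  have hBL : B * L = A * L :=
    calc B * L = (B * L) * (A * L) := by rw [mul_assoc, ← mul_assoc L, a1]
    _ = (B * L)ᵀ * (A * L)ᵀ := by rw [a4, b4]
    _ = (A * (L * B * L))ᵀ := by simp only [transpose_mul, mul_assoc]
    _ = A * L := by rw [b1, a4]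
  calc A = A * L * A := a2.symm
  _ = A * L * B := by rw [mul_assoc, ← hLB, ← mul_assoc]
  _ = B := by rw [← hBL, b2]

theorem transpose (h : IsMoorePenroseInv L A) : IsMoorePenroseInv Lᵀ Aᵀ := by
  obtain ⟨h1, h2, h3, h4⟩ := h
  refine ⟨?_, ?_, ?_, ?_⟩
  · rw [← transpose_mul, ← transpose_mul, ← mul_assoc, h1]
  · rw [← transpose_mul, ← transpose_mul, ← mul_assoc, h2]
  · rw [← transpose_mul, transpose_transpose, h4]
  · rw [← transpose_mul, transpose_transpose, h3]

theorem isSymm (hL : L.IsSymm) (h : IsMoorePenroseInv L A) : A.IsSymm :=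
  (hL ▸ h.transpose).unique h

end IsMoorePenroseInv

namespace Matrix.IsHermitian

variable {𝕜 ι : Type*} [RCLike 𝕜] [Fintype ι] [DecidableEq ι] {A : Matrix ι ι 𝕜}

theorem trace_cfc (hA : A.IsHermitian) (f : ℝ → ℝ) :
    (cfc f A).trace = ∑ i, (f (hA.eigenvalues i) : 𝕜) := by
  rw [cfc_eq hA f, IsHermitian.cfc, Unitary.conjStarAlgAut_apply, trace_mul_cycle,
    Unitary.coe_star_mul_self, one_mul, trace_diagonal]
  rfl

theorem map_univ_eq_eigenvalues_of_charpoly_eq (hA : A.IsHermitian) {γ : ι → ℝ}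
    (hγ : A.charpoly = ∏ i, (X - C (γ i : 𝕜))) :
    Finset.univ.val.map γ = Finset.univ.val.map hA.eigenvalues := by
  have h := hA.roots_charpoly_eq_eigenvalues
  rw [hγ, roots_prod _ _ (by simp [Finset.prod_ne_zero_iff, X_sub_C_ne_zero])] at h
  exact Multiset.map_injective RCLike.ofReal_injective
    (by simpa [Multiset.map_map, Function.comp_def] using h)

theorem sum_eq_trace_cfc_of_charpoly_eq (hA : A.IsHermitian) {γ : ι → ℝ}
    (hγ : A.charpoly = ∏ i, (X - C (γ i : 𝕜))) (f : ℝ → ℝ) :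
    ∑ i, (f (γ i) : 𝕜) = (cfc f A).trace := by
  have h := congrArg (fun s => (s.map fun x => (f x : 𝕜)).sum)
    (hA.map_univ_eq_eigenvalues_of_charpoly_eq hγ)
  simp only [Multiset.map_map, Function.comp_def, Finset.sum_map_val] at h
  rw [h, hA.trace_cfc]

theorem sum_eq_trace_of_charpoly_eq (hA : A.IsHermitian) {γ : ι → ℝ}
    (hγ : A.charpoly = ∏ i, (X - C (γ i : 𝕜))) : ∑ i, (γ i : 𝕜) = A.trace := by
  rw [← cfc_id ℝ A hA]
  exact hA.sum_eq_trace_cfc_of_charpoly_eq hγ id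

theorem sum_sq_eq_trace_mul_self_of_charpoly_eq (hA : A.IsHermitian) {γ : ι → ℝ}
    (hγ : A.charpoly = ∏ i, (X - C (γ i : 𝕜))) : ∑ i, (γ i : 𝕜) ^ 2 = (A * A).trace := by
  rw [← sq, ← cfc_pow_id (R := ℝ) A 2 hA]
  exact_mod_cast hA.sum_eq_trace_cfc_of_charpoly_eq hγ (· ^ (2 : ℕ))

end Matrix.IsHermitian

namespace Finset

theorem sum_sum_eq_two_mul_sum_lt {ι R : Type*} [Fintype ι] [LinearOrder ι] [Semiring R]
    {g : ι → ι → R} (hsymm : ∀ i j, g i j = g j i) (hdiag : ∀ i, g i i = 0) :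
    ∑ i, ∑ j, g i j = 2 * ∑ e ∈ univ.filter (fun e : ι × ι => e.1 < e.2), g e.1 e.2 := by
  have hsplit : ∀ e : ι × ι, g e.1 e.2 =
      (if e.1 < e.2 then g e.1 e.2 else 0) + (if e.2 < e.1 then g e.2 e.1 else 0) := by
    rintro ⟨i, j⟩
    rcases lt_trichotomy i j with h | rfl | h
    · simp [h, h.not_gt]
    · simp [hdiag]
    · simp [h, h.not_gt, hsymm i j]
  have hswap : ∑ e : ι × ι, (if e.2 < e.1 then g e.2 e.1 else 0) =
      ∑ e : ι × ι, (if e.1 < e.2 then g e.1 e.2 else 0) :=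
    Fintype.sum_equiv (Equiv.prodComm ι ι) _ _ fun _ => rfl
  rw [← Fintype.sum_prod_type', Fintype.sum_congr _ _ hsplit, sum_add_distrib, hswap,
    sum_filter, two_mul]

variable {ι : Type*} (s : Finset ι) (x : ι → ℝ)

theorem sum_sub_sum_div_card_eq_zero : ∑ i ∈ s, (x i - (∑ j ∈ s, x j) / #s) = 0 := by
  rw [sum_sub_distrib, sum_const, nsmul_eq_mul]
  rcases s.eq_empty_or_nonempty with rfl | hs
  · simp
  · field_simp [hs.card_pos.ne']
    ring

theorem sum_sub_const_sq (c : ℝ) :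
    ∑ i ∈ s, (x i - c) ^ 2 = ∑ i ∈ s, x i ^ 2 - 2 * c * ∑ i ∈ s, x i + #s * c ^ 2 := by
  have hexpand : ∀ i, (x i - c) ^ 2 = x i ^ 2 - 2 * c * x i + c ^ 2 := fun i => by ring
  simp only [hexpand, sum_add_distrib, sum_sub_distrib, ← mul_sum, sum_const, nsmul_eq_mul]

theorem sq_sum_abs_le_card_mul_sum_sq : (∑ i ∈ s, |x i|) ^ 2 ≤ #s * ∑ i ∈ s, x i ^ 2 := by
  simpa only [sq_abs] using sq_sum_le_card_mul_sum_sq (s := s) (f := fun i => |x i|)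

theorem sum_abs_le_sqrt_card_mul_sum_sq : ∑ i ∈ s, |x i| ≤ √(#s * ∑ i ∈ s, x i ^ 2) :=
  (le_abs_self _).trans (Real.abs_le_sqrt (sq_sum_abs_le_card_mul_sum_sq s x))

variable {s x}

theorem two_mul_abs_le_sum_abs_of_sum_eq_zero (h : ∑ j ∈ s, x j = 0) {i : ι} (hi : i ∈ s) :
    2 * |x i| ≤ ∑ j ∈ s, |x j| := by
  classical
  have hx : x i = -∑ j ∈ s.erase i, x j := by
    linarith [add_sum_erase s x hi]
  have hrest : |x i| ≤ ∑ j ∈ s.erase i, |x j| := by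
    rw [hx, abs_neg]; exact abs_sum_le_sum_abs _ _
  linarith [add_sum_erase s (fun j => |x j|) hi]

theorem two_mul_sum_sq_le_sq_sum_abs_of_sum_eq_zero (h : ∑ j ∈ s, x j = 0) :
    2 * ∑ i ∈ s, x i ^ 2 ≤ (∑ i ∈ s, |x i|) ^ 2 :=
  calc 2 * ∑ i ∈ s, x i ^ 2 = ∑ i ∈ s, |x i| * (2 * |x i|) := by
        rw [mul_sum]; exact sum_congr rfl fun i _ => by rw [← sq_abs]; ring
  _ ≤ ∑ i ∈ s, |x i| * ∑ j ∈ s, |x j| := sum_le_sum fun i hi =>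
        mul_le_mul_of_nonneg_left (two_mul_abs_le_sum_abs_of_sum_eq_zero h hi) (abs_nonneg _)
  _ = (∑ i ∈ s, |x i|) ^ 2 := by rw [← sum_mul, sq]

theorem two_mul_sqrt_sum_sq_div_two_le_sum_abs_of_sum_eq_zero (h : ∑ j ∈ s, x j = 0) :
    2 * √((∑ i ∈ s, x i ^ 2) / 2) ≤ ∑ i ∈ s, |x i| := by
  have := two_mul_sum_sq_le_sq_sum_abs_of_sum_eq_zero h
  linarith [Real.sqrt_le_iff.mpr ⟨by positivity,
    show (∑ i ∈ s, x i ^ 2) / 2 ≤ ((∑ i ∈ s, |x i|) / 2) ^ 2 by linarith⟩]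

end Finset

section Resistance

theorem resDist_self {V : Type*} (Ldag : Matrix V V ℝ) (i : V) : resDist Ldag i i = 0 := by
  unfold resDist; ring

theorem resDist_comm {V : Type*} {Ldag : Matrix V V ℝ} (h : Ldag.IsSymm) (i j : V) :
    resDist Ldag i j = resDist Ldag j i := by
  rw [resDist, resDist, h.apply i j]; ring

variable {V : Type*} [Fintype V] [DecidableEq V] {Ldag : Matrix V V ℝ}

theorem resLap_apply (i j : V) :
    resLap Ldag i j = if i = j then resTrans Ldag i else -resDist Ldag i j := by
  by_cases h : i = j
  · subst h; simp [resLap, resMatrix]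
  · simp [resLap, resMatrix, h]

theorem resLap_isHermitian (h : Ldag.IsSymm) : (resLap Ldag).IsHermitian := by
  refine isHermitian_iff_isSymm.mpr (IsSymm.ext fun i j => ?_)
  simp only [resLap_apply, eq_comm (a := j), resDist_comm h j i]
  split_ifs with hij
  · rw [hij]
  · rfl

theorem trace_resLap : (resLap Ldag).trace = ∑ i, resTrans Ldag i := by
  simp [trace, resLap_apply]

theorem trace_resLap_mul_self (h : Ldag.IsSymm) :
    (resLap Ldag * resLap Ldag).trace =
      ∑ i, resTrans Ldag i ^ 2 + ∑ i, ∑ j, resDist Ldag i j ^ 2 := by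
  have hentry : ∀ i j, resLap Ldag i j * resLap Ldag j i =
      (if i = j then resTrans Ldag i ^ 2 else 0) + resDist Ldag i j ^ 2 := by
    intro i j
    simp only [resLap_apply, resDist_comm h j i, eq_comm (a := j)]
    split_ifs with hij
    · subst hij; simp [resDist_self, sq]
    · ring
  simp only [trace, diag_apply, mul_apply, hentry, Finset.sum_add_distrib,
    Finset.sum_ite_eq, Finset.mem_univ, if_true]

theorem trace_resLap_mul_self_eq_sum_lt [LinearOrder V] (h : Ldag.IsSymm) :
    (resLap Ldag * resLap Ldag).trace = ∑ i, resTrans Ldag i ^ 2 +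
      2 * ∑ e ∈ Finset.univ.filter (fun e : V × V => e.1 < e.2), resDist Ldag e.1 e.2 ^ 2 := by
  rw [trace_resLap_mul_self h, Finset.sum_sum_eq_two_mul_sum_lt
    (fun i j => by rw [resDist_comm h]) (fun i => by rw [resDist_self, sq, mul_zero])]

end Resistance

theorem resLapEnergy_bounds_general {n : ℕ}
    (G : SimpleGraph (Fin n)) [DecidableRel G.Adj]
    (Ldag : Matrix (Fin n) (Fin n) ℝ)
    (hpen : IsMoorePenroseInv (G.lapMatrix ℝ) Ldag)
    (γL : Fin n → ℝ) (hchar : (resLap Ldag).charpoly = ∏ i, (X - C (γL i)))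
    (f F LE : ℝ)
    (hf : f = ∑ e ∈ Finset.univ.filter (fun e : Fin n × Fin n => e.1 < e.2),
      resDist Ldag e.1 e.2 ^ 2)
    (hF : F = f + (1 / 2) * ∑ i, (resTrans Ldag i - (∑ j, resTrans Ldag j) / n) ^ 2)
    (hLE : LE = ∑ i, |γL i - (∑ j, resTrans Ldag j) / n|) :
    2 * Real.sqrt F ≤ LE ∧ LE ≤ Real.sqrt (2 * n * F) := by
  have hsymm : Ldag.IsSymm := hpen.isSymm (G.isSymm_lapMatrix (R := ℝ))
  have hH := resLap_isHermitian hsymm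
  set T := ∑ j, resTrans Ldag j with hT
  set η := fun i => γL i - T / n
  have hsum : ∑ i, γL i = T := by
    rw [hT, ← trace_resLap]
    exact hH.sum_eq_trace_of_charpoly_eq hchar
  have hsum_sq : ∑ i, γL i ^ 2 = ∑ i, resTrans Ldag i ^ 2 + 2 * f := by
    rw [hf, ← trace_resLap_mul_self_eq_sum_lt hsymm]
    exact hH.sum_sq_eq_trace_mul_self_of_charpoly_eq hchar
  have hη : ∑ i, η i = 0 := by
    simpa [η, ← hsum] using Finset.univ.sum_sub_sum_div_card_eq_zero γL
  have hF_eq : F = (∑ i, η i ^ 2) / 2 := by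
    have h1 := Finset.univ.sum_sub_const_sq γL (T / n)
    have h2 := Finset.univ.sum_sub_const_sq (resTrans Ldag) (T / n)
    rw [hsum] at h1
    rw [← hT] at h2
    rw [hF]
    simp only [η]
    linarith
  have hLE_eq : LE = ∑ i, |η i| := hLE
  have hupper := Finset.univ.sum_abs_le_sqrt_card_mul_sum_sq η
  rw [Finset.card_univ, Fintype.card_fin] at hupper
  rw [hLE_eq, hF_eq, show 2 * (n : ℝ) * ((∑ i, η i ^ 2) / 2) = n * ∑ i, η i ^ 2 by ring]
  exact ⟨Finset.two_mul_sqrt_sum_sq_div_two_le_sum_abs_of_sum_eq_zero hη, hupper⟩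

theorem resLapEnergy_bounds {n : ℕ} (hn : 0 < n)
    (G : SimpleGraph (Fin n)) [DecidableRel G.Adj] (hG : G.Connected)
    (Ldag : Matrix (Fin n) (Fin n) ℝ)
    (hpen : IsMoorePenroseInv (G.lapMatrix ℝ) Ldag)
    (γL : Fin n → ℝ) (hchar : (resLap Ldag).charpoly = ∏ i, (X - C (γL i)))
    (f F LE : ℝ)
    (hf : f = ∑ e ∈ Finset.univ.filter (fun e : Fin n × Fin n => e.1 < e.2),
      resDist Ldag e.1 e.2 ^ 2)
    (hF : F = f + (1 / 2) * ∑ i, (resTrans Ldag i - (∑ j, resTrans Ldag j) / n) ^ 2)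
    (hLE : LE = ∑ i, |γL i - (∑ j, resTrans Ldag j) / n|) :
    2 * Real.sqrt F ≤ LE ∧ LE ≤ Real.sqrt (2 * n * F) :=
  resLapEnergy_bounds_general G Ldag hpen γL hchar f F LE hf hF hLE
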